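/- arXiv:2408.08991 — 3 statements merged into one kernel-verified Lean document; each statement's English description precedes it below -/
import Mathlib

section
/- Let a(1), …, a(N) ∈ ℤ^ν and let Φ_A : (ℝ_{>0})^ν → (ℝ_{>0})^N be the monomial map Φ_A(t)_j = t^{a(j)} = ∏_{i=1}^ν t_i^{a_i(j)}. Then the image of Φ_A equals the set {x ∈ (ℝ_{>0})^N : for every u ∈ ℤ^N with ∑_{j=1}^N u_j · a(j) = 0 (as a vector in ℤ^ν), one has ∏_{j=1}^N x_j^{u_j} = 1}. -/
/-!
Taking logarithms identifies the positive reals with `ℝ`, a divisible and hence injective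
`ℤ`-module. A point `x` satisfying all the relations defines a homomorphism `u ↦ ∏ x j ^ u j` on
`ℤ^N` that vanishes on the kernel of `u ↦ ∑ u j • a j`; so it factors through this map, and by
injectivity the factorization extends to all of `ℤ^ν`. The images `t i` of the unit vectors are
then a preimage of `x` under the monomial map.
-/

theorem Module.Baer.exists_comp_eq_of_ker_le {R V W M : Type*} [Ring R] [AddCommGroup V]
    [Module R V] [AddCommGroup W] [Module R W] [AddCommGroup M] [Module R M]
    (hM : Module.Baer R M) (T : V →ₗ[R] W) (f : V →ₗ[R] M)
    (h : LinearMap.ker T ≤ LinearMap.ker f) : ∃ g : W →ₗ[R] M, g ∘ₗ T = f := by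
  obtain ⟨g, hg⟩ := hM.extension_property ((LinearMap.ker T).liftQ T le_rfl)
    (LinearMap.ker_eq_bot.1 (Submodule.ker_liftQ_eq_bot _ _ _ le_rfl))
    ((LinearMap.ker T).liftQ f h)
  exact ⟨g, LinearMap.ext fun v => LinearMap.congr_fun hg (Submodule.Quotient.mk v)⟩

theorem Module.Baer.range_sum_smul_eq {R M ι κ : Type*} [Ring R] [AddCommGroup M] [Module R M]
    [Fintype ι] [Fintype κ] (hM : Module.Baer R M) (a : κ → ι → R) :
    Set.range (fun t : ι → M => fun j => ∑ i, a j i • t i) =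
      {x : κ → M | ∀ u : κ → R, ∑ j, u j • a j = 0 → ∑ j, u j • x j = 0} := by
  classical
  ext x
  constructor
  · rintro ⟨t, rfl⟩ u hu
    calc ∑ j, u j • ∑ i, a j i • t i = ∑ i, (∑ j, u j • a j) i • t i := by
          simp only [Finset.smul_sum, smul_smul, Finset.sum_apply, Pi.smul_apply, smul_eq_mul,
            Finset.sum_smul]
          exact Finset.sum_comm
      _ = 0 := by simp only [hu, Pi.zero_apply, zero_smul, Finset.sum_const_zero]
  · intro hx
    obtain ⟨g, hg⟩ := hM.exists_comp_eq_of_ker_le (Fintype.linearCombination R a)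
      (Fintype.linearCombination R x) fun u hu => by
        simp only [LinearMap.mem_ker, Fintype.linearCombination_apply] at hu ⊢
        exact hx u hu
    refine ⟨fun i => g (Pi.single i 1), funext fun j => ?_⟩
    calc ∑ i, a j i • g (Pi.single i 1)
        = g (a j) := by
          have := LinearMap.congr_fun ((LinearEquiv.piRing R M ι ℕ).symm_apply_apply g) (a j)
          rwa [LinearEquiv.piRing_symm_apply] at this
      _ = x j := by
          simpa [Fintype.linearCombination_apply_single] using
            LinearMap.congr_fun hg (Pi.single j 1)

namespace Real

noncomputable def expAddEquivPos : ℝ ≃+ Additive {x : ℝ // 0 < x} where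
  toFun r := Additive.ofMul ⟨exp r, exp_pos r⟩
  invFun x := log (Additive.toMul x).1
  left_inv r := log_exp r
  right_inv x := Subtype.ext (exp_log (Additive.toMul x).2)
  map_add' r s := Subtype.ext (exp_add r s)

theorem baer_additive_pos : Module.Baer ℤ (Additive {x : ℝ // 0 < x}) :=
  (Module.Baer.of_divisible ℝ).of_equiv expAddEquivPos.toIntLinearEquiv

end Real

/-- Let `a 1, …, a N ∈ ℤ^ν` and let `Φ_A : (ℝ_{>0})^ν → (ℝ_{>0})^N` be the
monomial map `Φ_A(t)_j = ∏ i, t i ^ a j i`. Then the image of `Φ_A` equals the set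
`{x : ∀ u ∈ ℤ^N with ∑ j, u j • a j = 0, ∏ j, x j ^ u j = 1}`. -/
theorem stmt6 (ν N : ℕ) (a : Fin N → Fin ν → ℤ) :
    Set.range (fun t : Fin ν → {x : ℝ // 0 < x} => fun j => ∏ i, t i ^ a j i) =
      {x : Fin N → {x : ℝ // 0 < x} |
        ∀ u : Fin N → ℤ, ∑ j, u j • a j = (0 : Fin ν → ℤ) → ∏ j, x j ^ u j = 1} :=
  -- in `Additive`, sums and `zsmul` are by definition products and `zpow`
  Real.baer_additive_pos.range_sum_smul_eq a
end

section
/- Let a(1), …, a(n+m) ∈ ℤ^ν and suppose the parameter exponent vectors a(n+1), …, a(n+m) span ℚ^ν over ℚ. Let X* := {(x, c) ∈ (ℂˣ)^n × (ℂˣ)^m : ∃ t ∈ (ℂˣ)^ν with x_i = t^{a(i)} for i = 1,…,n and c_j = t^{a(n+j)} for j = 1,…,m}, and let F : X* → (ℂˣ)^m be the restriction of (x, c) ↦ c. Then there exists a natural number 𝑁 such that for every c in the image of F, the fiber F⁻¹(c) is finite with exactly 𝑁 elements; in particular the cardinality of nonempty fibers is independent of c. -/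
/-!
The map `t ↦ (t ^ a(i))ᵢ` is a homomorphism of tori, so the fiber over a point `c = t₀ ^ a(n + ·)`
of the image is the translate by `t₀ ^ a(·)` of the image of the kernel `K` of the parameter
monomial map `t ↦ (t ^ a(n + j))ⱼ`. Every fiber therefore has the cardinality of that image, and
it remains to see that `K` is finite: since the parameter exponents span `ℚ^ν`, some nonzero
multiple `d • eᵢ` of each standard basis vector is an integer combination of them, which forces
`tᵢ ^ d = 1` for `t ∈ K`.
-/

open Finset

theorem Finset.prod_zpow_eq_zpow_sum {ι G : Type*} [CommGroup G] (s : Finset ι) (f : ι → ℤ)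
    (a : G) : ∏ i ∈ s, a ^ f i = a ^ ∑ i ∈ s, f i := by
  induction s using Finset.cons_induction with
  | empty => simp
  | cons i s _ ih => rw [prod_cons, sum_cons, zpow_add, ih]

theorem MonoidHom.image_preimage_eq_mul_image_ker {G H K : Type*} [Group G] [Monoid H] [Group K]
    (f : G →* H) (g : G →* K) (t₀ : G) :
    f '' (g ⁻¹' {g t₀}) = (f t₀ * ·) '' (f '' g.ker) := by
  ext x
  constructor
  · rintro ⟨t, ht, rfl⟩
    refine ⟨f (t₀⁻¹ * t), ⟨t₀⁻¹ * t, ?_, rfl⟩, ?_⟩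
    · simp_all [MonoidHom.mem_ker]
    · simp [← map_mul]
  · rintro ⟨_, ⟨s, hs, rfl⟩, rfl⟩
    exact ⟨t₀ * s, by simp_all [MonoidHom.mem_ker], map_mul f t₀ s⟩

section Monomial

variable {G : Type*} [CommGroup G] {ι ν : Type*} [Fintype ν]

def monomialHom (b : ι → ν → ℤ) : (ν → G) →* (ι → G) where
  toFun t i := ∏ l, t l ^ b i l
  map_one' := by ext; simp
  map_mul' s t := by ext; simp [mul_zpow, prod_mul_distrib]

@[simp]
theorem monomialHom_apply (b : ι → ν → ℤ) (t : ν → G) (i : ι) :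
    monomialHom b t i = ∏ l, t l ^ b i l :=
  rfl

theorem zpow_eq_one_of_mem_ker_monomialHom [Fintype ι] [DecidableEq ν] {b : ι → ν → ℤ}
    {t : ν → G} (ht : t ∈ (monomialHom b).ker) {c : ι → ℤ} {i : ν} {d : ℤ}
    (hc : ∀ l, ∑ j, c j * b j l = if l = i then d else 0) : t i ^ d = 1 := by
  calc t i ^ d = ∏ l, t l ^ (if l = i then d else 0) := by simp [apply_ite]
    _ = ∏ l, t l ^ ∑ j, c j * b j l := by simp only [hc]
    _ = ∏ j, (∏ l, t l ^ b j l) ^ c j := by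
      simp only [← prod_zpow_eq_zpow_sum, ← prod_zpow, ← zpow_mul, mul_comm (c _)]
      exact prod_comm
    _ = 1 := by
      have hker (j : ι) : ∏ l, t l ^ b j l = 1 := congrFun (MonoidHom.mem_ker.mp ht) j
      simp [hker]

end Monomial

theorem exists_int_combination_eq_single {ι ν : Type*} [Fintype ι] [DecidableEq ν]
    {b : ι → ν → ℤ} (hspan : Submodule.span ℚ (Set.range fun j l => (b j l : ℚ)) = ⊤) (i : ν) :
    ∃ d : ℤ, d ≠ 0 ∧ ∃ c : ι → ℤ, ∀ l, ∑ j, c j * b j l = if l = i then d else 0 := by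
  obtain ⟨q, hq⟩ := Submodule.mem_span_range_iff_exists_fun ℚ |>.mp
    (hspan ▸ Submodule.mem_top : (Pi.single i 1 : ν → ℚ) ∈ _)
  obtain ⟨⟨d, hd⟩, hint⟩ := IsLocalization.exist_integer_multiples_of_finite (nonZeroDivisors ℤ) q
  choose c hc using hint
  refine ⟨d, nonZeroDivisors.ne_zero hd, c, fun l => ?_⟩
  have hql := congrFun hq l
  simp only [Finset.sum_apply, Pi.smul_apply, smul_eq_mul, Pi.single_apply] at hql
  have hcq (j : ι) : (c j : ℚ) = d * q j := by simpa using hc j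
  have : ((∑ j, c j * b j l : ℤ) : ℚ) = d * if l = i then 1 else 0 := by
    push_cast
    simp only [hcq, ← hql, mul_sum, mul_assoc]
  rw [mul_ite, mul_one, mul_zero] at this
  split_ifs at this ⊢ <;> exact_mod_cast this

theorem finite_ker_monomialHom {R ι ν : Type*} [CommRing R] [IsDomain R] [Fintype ι] [Fintype ν]
    {b : ι → ν → ℤ} (hspan : Submodule.span ℚ (Set.range fun j l => (b j l : ℚ)) = ⊤) :
    ((monomialHom b : (ν → Rˣ) →* (ι → Rˣ)).ker : Set (ν → Rˣ)).Finite := by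
  classical
  choose d hd c hc using exists_int_combination_eq_single hspan
  have hroots : ∀ l, (rootsOfUnity (d l).natAbs R : Set Rˣ).Finite := fun l =>
    have : NeZero (d l).natAbs := ⟨Int.natAbs_ne_zero.mpr (hd l)⟩
    @Set.toFinite _ _ (inferInstanceAs (Finite (rootsOfUnity _ R)))
  refine (Set.Finite.pi hroots).subset fun t ht l _ => ?_
  exact pow_natAbs_eq_one.mpr (zpow_eq_one_of_mem_ker_monomialHom ht (hc l))

/-- Let `a 1, …, a (n+m) ∈ ℤ^ν` with the parameter exponent vectors
`a (n+1), …, a (n+m)` spanning `ℚ^ν` over `ℚ`.  For `c ∈ (ℂˣ)^m` in the image of the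
projection `F : X* → (ℂˣ)^m`, the fiber `F⁻¹(c)` (identified with its set of
`x`-coordinates) is finite, of cardinality `N` independent of `c`. -/
theorem stmt9 (ν n m : ℕ) (a : Fin (n + m) → Fin ν → ℤ)
    (hspan : Submodule.span ℚ
      (Set.range fun j : Fin m => fun i : Fin ν => (a (Fin.natAdd n j) i : ℚ)) = ⊤) :
    ∃ N : ℕ, ∀ c : Fin m → ℂˣ,
      (∃ t : Fin ν → ℂˣ, ∀ j, c j = ∏ l, t l ^ a (Fin.natAdd n j) l) →
      ({x : Fin n → ℂˣ | ∃ t : Fin ν → ℂˣ,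
          (∀ i, x i = ∏ l, t l ^ a (Fin.castAdd m i) l) ∧
          (∀ j, c j = ∏ l, t l ^ a (Fin.natAdd n j) l)}.Finite ∧
        Nat.card {x : Fin n → ℂˣ | ∃ t : Fin ν → ℂˣ,
          (∀ i, x i = ∏ l, t l ^ a (Fin.castAdd m i) l) ∧
          (∀ j, c j = ∏ l, t l ^ a (Fin.natAdd n j) l)} = N) := by
  let φ : (Fin ν → ℂˣ) →* (Fin n → ℂˣ) := monomialHom fun i => a (Fin.castAdd m i)
  let ψ : (Fin ν → ℂˣ) →* (Fin m → ℂˣ) := monomialHom fun j => a (Fin.natAdd n j)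
  have hK : (ψ.ker : Set (Fin ν → ℂˣ)).Finite := finite_ker_monomialHom hspan
  refine ⟨Nat.card (φ '' ψ.ker), fun c ⟨t₀, hc⟩ => ?_⟩
  have hfiber : {x : Fin n → ℂˣ | ∃ t : Fin ν → ℂˣ,
      (∀ i, x i = ∏ l, t l ^ a (Fin.castAdd m i) l) ∧
      (∀ j, c j = ∏ l, t l ^ a (Fin.natAdd n j) l)} = φ '' (ψ ⁻¹' {ψ t₀}) := by
    ext x
    simp [φ, ψ, funext_iff, ← hc, eq_comm, and_comm]
  rw [hfiber, MonoidHom.image_preimage_eq_mul_image_ker]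
  exact ⟨(hK.image φ).image _, Nat.card_image_of_injective (mul_right_injective _) _⟩
end

section
/- Write points of ℂ^{n+m} as y = (x, c) with x ∈ ℂ^n and c ∈ ℂ^m. Let β(1), …, β(r) ∈ ℤ^{n+m} and suppose that the projections of β(1), …, β(r) to the first n coordinates are linearly independent over ℚ. Define Φ : U → ℂ^r × ℂ^m on the open set U := {y ∈ ℂ^{n+m} : y_j ≠ 0 for all j} by Φ(y) = ((y^{β(1)} − 1, …, y^{β(r)} − 1), (y_{n+1}, …, y_{n+m})), where y^β = ∏_j y_j^{β_j}. Then at every point y ∈ U the Fréchet derivative of Φ is a surjective ℂ-linear map from ℂ^{n+m} to ℂ^r × ℂ^m; that is, the pair consisting of the binomial system and the coordinate projection onto the last m coordinates is a submersion at every point of the torus. -/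
/-! In logarithmic coordinates `v = y * u` the derivative of `y ↦ y ^ β i` at a point of the
torus is `u ↦ y ^ β i * ∑ j, β i j * u j`, so up to invertible rescalings the derivative of `Φ`
is `u ↦ (B u, (u_{n+1}, …, u_{n+m}))` for the exponent matrix `B`. The last `m` coordinates
of `u` can be prescribed freely, and then the equation `B u = a` is solved by the first `n`
coordinates because the left `r × n` block of `B` has linearly independent rows; independence
of integer vectors holds over `ℚ` iff it holds over `ℤ` iff it holds over any field of
characteristic zero. -/

open Function
open scoped Matrix

theorem Matrix.mulVec_surjective_of_linearIndependent_row {K ι κ : Type*} [Field K]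
    [Fintype ι] [Fintype κ] {M : Matrix ι κ K} (h : LinearIndependent K M.row) :
    Surjective M.mulVec := by
  have hrange : LinearMap.range M.mulVecLin = ⊤ := by
    apply Submodule.eq_top_of_finrank_eq
    rw [← Matrix.rank, h.rank_matrix, Module.finrank_fintype_fun_eq_card]
  exact LinearMap.range_eq_top.mp hrange

theorem Matrix.mulVec_append {R ι : Type*} [NonUnitalNonAssocSemiring R] {n m : ℕ}
    (B : Matrix ι (Fin (n + m)) R) (w : Fin n → R) (b : Fin m → R) :
    B *ᵥ Fin.append w b =
      B.submatrix id (Fin.castAdd m) *ᵥ w + B.submatrix id (Fin.natAdd n) *ᵥ b := by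
  ext i
  simp [Matrix.mulVec, dotProduct, Fin.sum_univ_add]

theorem Matrix.exists_mulVec_eq_of_surjective_castAdd {R ι : Type*} [Ring R] {n m : ℕ}
    {B : Matrix ι (Fin (n + m)) R} (hB : Surjective (B.submatrix id (Fin.castAdd m)).mulVec)
    (a : ι → R) (b : Fin m → R) :
    ∃ u : Fin (n + m) → R, B *ᵥ u = a ∧ ∀ j, u (Fin.natAdd n j) = b j := by
  obtain ⟨w, hw⟩ := hB (a - B.submatrix id (Fin.natAdd n) *ᵥ b)
  exact ⟨Fin.append w b, by rw [Matrix.mulVec_append, hw, sub_add_cancel], Fin.append_right w b⟩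

theorem hasFDerivAt_prod_zpow {𝕜 ι : Type*} [NontriviallyNormedField 𝕜] [Fintype ι]
    (β : ι → ℤ) {y : ι → 𝕜} (hy : ∀ j, y j ≠ 0) :
    HasFDerivAt (fun z : ι → 𝕜 => ∏ j, z j ^ β j)
      ((∏ j, y j ^ β j) •
        ∑ j, ((β j : 𝕜) / y j) • (ContinuousLinearMap.proj j : (ι → 𝕜) →L[𝕜] 𝕜)) y := by
  classical
  have hfactor : ∀ j, HasFDerivAt (fun z : ι → 𝕜 => z j ^ β j)
      (((β j : 𝕜) * y j ^ (β j - 1)) • (ContinuousLinearMap.proj j : (ι → 𝕜) →L[𝕜] 𝕜)) y :=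
    fun j => (hasDerivAt_zpow (β j) (y j) (.inl (hy j))).comp_hasFDerivAt y
      (hasFDerivAt_apply j y)
  refine (HasFDerivAt.finsetProd (u := Finset.univ) fun j _ => hfactor j).congr_fderiv ?_
  rw [Finset.smul_sum]
  refine Finset.sum_congr rfl fun j _ => ?_
  rw [smul_smul, smul_smul, ← Finset.prod_erase_mul _ _ (Finset.mem_univ j),
    zpow_sub_one₀ (hy j)]
  congr 1
  field_simp

section BinomialSystem

variable {𝕜 : Type*} [NontriviallyNormedField 𝕜] {n m r : ℕ} (β : Fin r → Fin (n + m) → ℤ)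

def binomialSystem (y : Fin (n + m) → 𝕜) : (Fin r → 𝕜) × (Fin m → 𝕜) :=
  (fun i => (∏ j, y j ^ β i j) - 1, fun j => y (Fin.natAdd n j))

def binomialSystemFDeriv (y : Fin (n + m) → 𝕜) :
    (Fin (n + m) → 𝕜) →L[𝕜] (Fin r → 𝕜) × (Fin m → 𝕜) :=
  (ContinuousLinearMap.pi fun i => (∏ j, y j ^ β i j) •
      ∑ j, ((β i j : 𝕜) / y j) • (ContinuousLinearMap.proj j : (Fin (n + m) → 𝕜) →L[𝕜] 𝕜)).prod
    (ContinuousLinearMap.pi fun j => ContinuousLinearMap.proj (Fin.natAdd n j))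

variable {β} {y : Fin (n + m) → 𝕜}

theorem hasFDerivAt_binomialSystem (hy : ∀ j, y j ≠ 0) :
    HasFDerivAt (binomialSystem β) (binomialSystemFDeriv β y) y :=
  (hasFDerivAt_pi.2 fun i => (hasFDerivAt_prod_zpow (β i) hy).sub_const 1).prodMk
    (hasFDerivAt_pi.2 fun _ => hasFDerivAt_apply _ y)

theorem binomialSystemFDeriv_surjective [CharZero 𝕜]
    (hβ : LinearIndependent ℚ fun i => fun j : Fin n => (β i (Fin.castAdd m j) : ℚ))
    (hy : ∀ j, y j ≠ 0) : Surjective (binomialSystemFDeriv β y) := by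
  rintro ⟨a, b⟩
  have hP : ∀ i, ∏ j, y j ^ β i j ≠ 0 := fun i =>
    Finset.prod_ne_zero_iff.2 fun j _ => zpow_ne_zero _ (hy j)
  have hβℤ : LinearIndependent ℤ fun i => fun j : Fin n => β i (Fin.castAdd m j) := by
    rw [← linearIndependent_algebraMap_comp_iff (S := ℚ)]
    exact hβ
  have hB :
      Surjective ((Matrix.of fun i j => (β i j : 𝕜)).submatrix id (Fin.castAdd m)).mulVec := by
    apply Matrix.mulVec_surjective_of_linearIndependent_row
    rw [← linearIndependent_algebraMap_comp_iff (S := 𝕜)] at hβℤ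
    exact hβℤ
  obtain ⟨u, hu, hu_natAdd⟩ := Matrix.exists_mulVec_eq_of_surjective_castAdd hB
    (fun i => a i / ∏ j, y j ^ β i j) (fun j => b j / y (Fin.natAdd n j))
  refine ⟨fun j => y j * u j, Prod.ext (funext fun i => ?_) (funext fun j => ?_)⟩
  · have hui : ∑ j, (β i j : 𝕜) * u j = a i / ∏ j, y j ^ β i j := congrFun hu i
    simp only [binomialSystemFDeriv, ContinuousLinearMap.prod_apply,
      ContinuousLinearMap.pi_apply, _root_.smul_apply, _root_.sum_apply,
      ContinuousLinearMap.proj_apply, smul_eq_mul]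
    have hterm : ∀ j, (β i j : 𝕜) / y j * (y j * u j) = β i j * u j := fun j => by
      field_simp [hy j]
    simp only [hterm, hui]
    exact mul_div_cancel₀ _ (hP i)
  · simp [binomialSystemFDeriv, hu_natAdd, mul_div_cancel₀ _ (hy _)]

end BinomialSystem

/-- Write points of `ℂ^{n+m}` as `y = (x, c)`.  Let `β 1, …, β r ∈ ℤ^{n+m}`
whose projections to the first `n` coordinates are linearly independent over `ℚ`.  Define
`Φ(y) = ((y ^ β 1 − 1, …, y ^ β r − 1), (y_{n+1}, …, y_{n+m}))` on the torus
`U = {y : ∀ j, y j ≠ 0}`.  Then at every point of `U`, `Φ` is differentiable and its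
Fréchet derivative is a surjective `ℂ`-linear map `ℂ^{n+m} → ℂ^r × ℂ^m`. -/
theorem stmt15 (n m r : ℕ) (β : Fin r → Fin (n + m) → ℤ)
    (hβ : LinearIndependent ℚ fun i => fun j : Fin n => (β i (Fin.castAdd m j) : ℚ))
    (Φ : (Fin (n + m) → ℂ) → (Fin r → ℂ) × (Fin m → ℂ))
    (hΦ : Φ = fun y => (fun i => (∏ j, y j ^ β i j) - 1, fun j => y (Fin.natAdd n j))) :
    ∀ y : Fin (n + m) → ℂ, (∀ j, y j ≠ 0) →
      DifferentiableAt ℂ Φ y ∧ Function.Surjective (fderiv ℂ Φ y) := by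
  subst hΦ
  intro y hy
  have hderiv := hasFDerivAt_binomialSystem (β := β) hy
  exact ⟨hderiv.differentiableAt, hderiv.fderiv ▸ binomialSystemFDeriv_surjective hβ hy⟩
end
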